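/- arXiv:1312.6309 — 3 statements merged into one kernel-verified Lean document; each statement's English description precedes it below -/
import Mathlib

section
/- Let $\mathfrak{g}^{(k)} = (\mathfrak{g}^{(k)}_1,\dots,\mathfrak{g}^{(k)}_s)$ be a system of homogeneous forms of degree $k \geq 2$ over $\mathbb{Q}$ in variables $(\mathbf{y},\mathbf{z})$. Define the doubled system $\tilde{\mathfrak{g}}^{(k)}(\mathbf{y},\mathbf{y}',\mathbf{z}) = (\mathfrak{g}^{(k)}(\mathbf{y},\mathbf{z}), \mathfrak{g}^{(k)}(\mathbf{y}',\mathbf{z}))$, where $\mathbf{y}, \mathbf{y}', \mathbf{z}$ are disjoint sets of variables. Then $h_{\mathbb{Q}}(\tilde{\mathfrak{g}}^{(k)}; \mathbf{z}) = h_{\mathbb{Q}}(\mathfrak{g}^{(k)}; \mathbf{z})$. -/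
open MvPolynomial

/-- The Schmidt rank of a form `f(y,z)` relative to the variables `z`: the minimal `l` such that
`f = ∑ i, U i * V i + W(z)` with `U i, V i` homogeneous of positive degree and `W` a form of
degree `k` in the `z`-variables alone. -/
noncomputable def relSchmidtRank {K : Type*} [Field K] {σ τ : Type*} (k : ℕ)
    (f : MvPolynomial (σ ⊕ τ) K) : ℕ :=
  sInf { l | ∃ (U V : Fin l → MvPolynomial (σ ⊕ τ) K) (dU dV : Fin l → ℕ)
      (W : MvPolynomial τ K),
    (∀ i, 0 < dU i ∧ (U i).IsHomogeneous (dU i) ∧ 0 < dV i ∧ (V i).IsHomogeneous (dV i)) ∧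
    W.IsHomogeneous k ∧
    f = ∑ i, U i * V i + rename Sum.inr W }

/-- Relative Schmidt rank of a system: the minimum over nontrivial linear combinations. -/
noncomputable def relSchmidtRankSys {K : Type*} [Field K] {σ τ ι : Type*} [Fintype ι] (k : ℕ)
    (f : ι → MvPolynomial (σ ⊕ τ) K) : ℕ :=
  sInf { h | ∃ lam : ι → K, lam ≠ 0 ∧ h = relSchmidtRank k (∑ i, C (lam i) * f i) }

namespace RSRaux

variable {σ σ' τ : Type*}

/-- The decomposition set underlying `relSchmidtRank`. -/
def decompSet (k : ℕ) (f : MvPolynomial (σ ⊕ τ) ℚ) : Set ℕ :=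
  { l | ∃ (U V : Fin l → MvPolynomial (σ ⊕ τ) ℚ) (dU dV : Fin l → ℕ)
      (W : MvPolynomial τ ℚ),
    (∀ i, 0 < dU i ∧ (U i).IsHomogeneous (dU i) ∧ 0 < dV i ∧ (V i).IsHomogeneous (dV i)) ∧
    W.IsHomogeneous k ∧
    f = ∑ i, U i * V i + rename Sum.inr W }

lemma relSchmidtRank_eq (k : ℕ) (f : MvPolynomial (σ ⊕ τ) ℚ) :
    relSchmidtRank k f = sInf (decompSet k f) := rfl

/-- Transfer of a decomposition along a variable-substitution which sends every variable to a
homogeneous degree-1 polynomial and fixes the `z`-variables, possibly adjusting by a `z`-form. -/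
lemma decompSet_aeval {k l : ℕ} {f : MvPolynomial (σ ⊕ τ) ℚ}
    (h : σ ⊕ τ → MvPolynomial (σ' ⊕ τ) ℚ)
    (hh : ∀ v, (h v).IsHomogeneous 1)
    (hinr : ∀ t, h (Sum.inr t) = X (Sum.inr t))
    {E : MvPolynomial τ ℚ} (hE : E.IsHomogeneous k)
    (hl : l ∈ decompSet k f) :
    l ∈ decompSet k (aeval h f + rename Sum.inr E) := by
  obtain ⟨U, V, dU, dV, W, hUV, hW, hf⟩ := hl
  refine ⟨fun i => aeval h (U i), fun i => aeval h (V i), dU, dV, W + E, ?_, hW.add hE, ?_⟩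
  · intro i
    obtain ⟨h1, h2, h3, h4⟩ := hUV i
    exact ⟨h1, by simpa using h2.aeval h hh, h3, by simpa using h4.aeval h hh⟩
  · have key : aeval h (rename Sum.inr W) = rename Sum.inr W := by
      rw [aeval_rename]
      have : h ∘ Sum.inr = X ∘ Sum.inr := funext hinr
      rw [this]
      rw [rename_eq_aeval]
    rw [hf]
    simp only [map_add, map_sum, map_mul, key]
    rw [add_assoc]

/-- Every homogeneous form of degree `k ≥ 2` admits some decomposition. -/
lemma decompSet_nonempty [Fintype σ] [DecidableEq σ] {k : ℕ} (hk : 2 ≤ k)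
    {f : MvPolynomial (σ ⊕ τ) ℚ} (hf : f.IsHomogeneous k) :
    (decompSet k f).Nonempty := by
  classical
  -- auxiliary predicate: `f` can be written as `∑_{i : σ} X (inl i) * q i + W(z)`
  set T : MvPolynomial (σ ⊕ τ) ℚ → Prop := fun F =>
    ∃ (q : σ → MvPolynomial (σ ⊕ τ) ℚ) (W : MvPolynomial τ ℚ),
      (∀ i, (q i).IsHomogeneous (k - 1)) ∧ W.IsHomogeneous k ∧
      F = ∑ i : σ, X (Sum.inl i) * q i + rename Sum.inr W with hT
  have hTadd : ∀ a b, T a → T b → T (a + b) := by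
    rintro a b ⟨qa, Wa, hqa, hWa, rfl⟩ ⟨qb, Wb, hqb, hWb, rfl⟩
    refine ⟨fun i => qa i + qb i, Wa + Wb, fun i => (hqa i).add (hqb i), hWa.add hWb, ?_⟩
    rw [map_add]
    simp only [mul_add, Finset.sum_add_distrib]
    ring
  have hTzero : T 0 := by
    refine ⟨0, 0, fun i => isHomogeneous_zero _ _ _, isHomogeneous_zero _ _ _, ?_⟩
    simp
  have hTmon : ∀ d ∈ f.support, T (monomial d (coeff d f)) := by
    intro d hd
    have hc : coeff d f ≠ 0 := by simpa using hd
    have hdeg : d.degree = k := by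
      rw [Finsupp.degree_eq_weight_one]
      exact hf hc
    by_cases hcase : ∀ i : σ, d (Sum.inl i) = 0
    · -- purely `z`-monomial
      have hsupp : ↑d.support ⊆ Set.range (Sum.inr : τ → σ ⊕ τ) := by
        intro v hv
        rcases v with i | t
        · exact absurd (hcase i) (by simpa using hv)
        · exact ⟨t, rfl⟩
      set d' : τ →₀ ℕ := Finsupp.comapDomain Sum.inr d Sum.inr_injective.injOn with hd'
      have hren : rename (Sum.inr : τ → σ ⊕ τ) (monomial d' (coeff d f))
          = monomial d (coeff d f) := by
        rw [rename_monomial, Finsupp.mapDomain_comapDomain Sum.inr Sum.inr_injective d hsupp]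
      have hWhom : (monomial d' (coeff d f)).IsHomogeneous k := by
        rw [← IsHomogeneous.rename_isHomogeneous_iff (Sum.inr_injective (α := σ) (β := τ)), hren]
        exact isHomogeneous_monomial _ hdeg
      refine ⟨0, monomial d' (coeff d f), fun i => isHomogeneous_zero _ _ _, hWhom, ?_⟩
      simp [hren]
    · push_neg at hcase
      obtain ⟨i, hi⟩ := hcase
      set e : (σ ⊕ τ) →₀ ℕ := d - Finsupp.single (Sum.inl i) 1 with he
      have hle : Finsupp.single (Sum.inl i) 1 ≤ d :=
        Finsupp.single_le_iff.mpr (Nat.one_le_iff_ne_zero.mpr hi)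
      have hde : Finsupp.single (Sum.inl i) 1 + e = d := add_tsub_cancel_of_le hle
      have hdege : e.degree = k - 1 := by
        have : (Finsupp.single (Sum.inl i) 1 + e).degree = k := by rw [hde]; exact hdeg
        rw [Finsupp.degree_eq_weight_one, map_add, ← Finsupp.degree_eq_weight_one] at this
        have h1 : (Finsupp.single (Sum.inl (β := τ) i) 1).degree = 1 := by
          exact Finsupp.degree_single _ _
        omega
      refine ⟨fun j => if j = i then monomial e (coeff d f) else 0, 0,
        ?_, isHomogeneous_zero _ _ _, ?_⟩
      · intro j
        by_cases hj : j = i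
        · simpa [hj] using isHomogeneous_monomial (coeff d f) hdege
        · simpa [hj] using isHomogeneous_zero (σ ⊕ τ) ℚ (k - 1)
      · rw [map_zero, add_zero]
        rw [Finset.sum_congr rfl (fun j _ => mul_ite (j = i) (X (Sum.inl j))
          (monomial e (coeff d f)) 0)]
        simp only [mul_zero]
        rw [Finset.sum_ite_eq' Finset.univ i
          (fun j => X (Sum.inl j) * monomial e (coeff d f))]
        simp only [Finset.mem_univ, if_true]
        have : (X (Sum.inl i) : MvPolynomial (σ ⊕ τ) ℚ)
            = monomial (Finsupp.single (Sum.inl i) 1) 1 := rfl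
        rw [this, monomial_mul, one_mul, hde]
  have hTf : T f := by
    rw [← support_sum_monomial_coeff f]
    exact Finset.sum_induction _ T hTadd hTzero hTmon
  obtain ⟨q, W, hq, hW, hfeq⟩ := hTf
  refine ⟨Fintype.card σ, fun i => X (Sum.inl ((Fintype.equivFin σ).symm i)),
    fun i => q ((Fintype.equivFin σ).symm i), fun _ => 1, fun _ => k - 1, W, ?_, hW, ?_⟩
  · exact fun i => ⟨one_pos, isHomogeneous_X _ _, show 0 < k - 1 by omega, hq _⟩
  · rw [hfeq]
    congr 1
    exact (Equiv.sum_comp (Fintype.equivFin σ).symm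
      (fun j => X (Sum.inl j) * q j)).symm

/-- Specialization of `decompSet_aeval` to a rename of the `y`-variables. -/
lemma decompSet_rename {k l : ℕ} {f : MvPolynomial (σ ⊕ τ) ℚ} (e : σ → σ')
    (hl : l ∈ decompSet k f) :
    l ∈ decompSet k (rename (Sum.map e (id : τ → τ)) f) := by
  have := decompSet_aeval (σ' := σ') (X ∘ Sum.map e (id : τ → τ))
    (fun v => isHomogeneous_X _ _) (fun t => rfl) (isHomogeneous_zero τ ℚ k) hl
  have hre : aeval (X ∘ Sum.map e (id : τ → τ)) f = rename (Sum.map e (id : τ → τ)) f := by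
    rw [rename_eq_aeval]
  rw [map_zero, add_zero, hre] at this
  exact this

end RSRaux

/-- the doubled system `(g(y,z), g(y',z))` has the same relative Schmidt rank with
respect to `z` as the system `g(y,z)`. -/
theorem relSchmidtRankSys_doubled {m p s k : ℕ} (hk : 2 ≤ k) (hs : 1 ≤ s)
    (g : Fin s → MvPolynomial (Fin m ⊕ Fin p) ℚ)
    (hg : ∀ i, (g i).IsHomogeneous k) :
    relSchmidtRankSys k
      (Sum.elim
        (fun j : Fin s => rename (Sum.map Sum.inl (id : Fin p → Fin p)) (g j))
        (fun j : Fin s => rename (Sum.map Sum.inr (id : Fin p → Fin p)) (g j)) :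
        Fin s ⊕ Fin s → MvPolynomial ((Fin m ⊕ Fin m) ⊕ Fin p) ℚ)
      = relSchmidtRankSys k g := by
  classical
  set L : (Fin m ⊕ Fin p) → ((Fin m ⊕ Fin m) ⊕ Fin p) := Sum.map Sum.inl id with hLdef
  set R : (Fin m ⊕ Fin p) → ((Fin m ⊕ Fin m) ⊕ Fin p) := Sum.map Sum.inr id with hRdef
  set G : Fin s ⊕ Fin s → MvPolynomial ((Fin m ⊕ Fin m) ⊕ Fin p) ℚ :=
    Sum.elim (fun j => rename L (g j)) (fun j => rename R (g j)) with hGdef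
  -- the `z`-part projection
  set ψ : MvPolynomial (Fin m ⊕ Fin p) ℚ →ₐ[ℚ] MvPolynomial (Fin p) ℚ :=
    aeval (Sum.elim (fun _ => 0) X) with hψdef
  have hψhom : ∀ {h : MvPolynomial (Fin m ⊕ Fin p) ℚ}, h.IsHomogeneous k →
      (ψ h).IsHomogeneous k := by
    intro h hh
    have := hh.aeval (n := 1) (Sum.elim (fun _ => (0 : MvPolynomial (Fin p) ℚ)) X)
      (fun v => by rcases v with i | t
                   · exact isHomogeneous_zero _ _ _
                   · exact isHomogeneous_X _ _)
    rw [hψdef]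
    simpa using this
  -- the two projections killing one copy of the `y`-variables
  set hL : ((Fin m ⊕ Fin m) ⊕ Fin p) → MvPolynomial (Fin m ⊕ Fin p) ℚ :=
    Sum.elim (Sum.elim (fun i => X (Sum.inl i)) (fun _ => 0)) (fun t => X (Sum.inr t)) with hhL
  set hR : ((Fin m ⊕ Fin m) ⊕ Fin p) → MvPolynomial (Fin m ⊕ Fin p) ℚ :=
    Sum.elim (Sum.elim (fun _ => 0) (fun i => X (Sum.inl i))) (fun t => X (Sum.inr t)) with hhR
  have hLhom : ∀ v, (hL v).IsHomogeneous 1 := by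
    rintro ((i | i) | t) <;> first
      | exact isHomogeneous_X _ _
      | exact isHomogeneous_zero _ _ _
  have hRhom : ∀ v, (hR v).IsHomogeneous 1 := by
    rintro ((i | i) | t) <;> first
      | exact isHomogeneous_X _ _
      | exact isHomogeneous_zero _ _ _
  have hLL : ∀ h : MvPolynomial (Fin m ⊕ Fin p) ℚ, aeval hL (rename L h) = h := by
    intro h
    rw [aeval_rename]
    have : hL ∘ L = X := by funext v; rcases v with i | t <;> rfl
    rw [this, aeval_X_left_apply]
  have hRR : ∀ h : MvPolynomial (Fin m ⊕ Fin p) ℚ, aeval hR (rename R h) = h := by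
    intro h
    rw [aeval_rename]
    have : hR ∘ R = X := by funext v; rcases v with i | t <;> rfl
    rw [this, aeval_X_left_apply]
  have hLR : ∀ h : MvPolynomial (Fin m ⊕ Fin p) ℚ,
      aeval hL (rename R h) = rename Sum.inr (ψ h) := by
    intro h
    rw [aeval_rename]
    have h1 : (rename (Sum.inr : Fin p → Fin m ⊕ Fin p)).comp ψ
        = aeval (hL ∘ R) := by
      rw [hψdef, comp_aeval]
      congr 1
      funext v
      rcases v with i | t <;> simp [hhL, hRdef]
    exact (congrFun (congrArg DFunLike.coe h1) h).symm
  have hRL : ∀ h : MvPolynomial (Fin m ⊕ Fin p) ℚ,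
      aeval hR (rename L h) = rename Sum.inr (ψ h) := by
    intro h
    rw [aeval_rename]
    have h1 : (rename (Sum.inr : Fin p → Fin m ⊕ Fin p)).comp ψ
        = aeval (hR ∘ L) := by
      rw [hψdef, comp_aeval]
      congr 1
      funext v
      rcases v with i | t <;> simp [hhR, hLdef]
    exact (congrFun (congrArg DFunLike.coe h1) h).symm
  -- linear combinations are homogeneous of degree k
  have hcombo : ∀ lam : Fin s → ℚ, (∑ j, C (lam j) * g j).IsHomogeneous k := by
    intro lam
    exact IsHomogeneous.sum _ _ _ (fun j _ => (hg j).C_mul (lam j))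
  -- splitting a combination of the doubled system
  have hsplit : ∀ lam : Fin s ⊕ Fin s → ℚ,
      (∑ i, C (lam i) * G i)
        = rename L (∑ j, C (lam (Sum.inl j)) * g j)
          + rename R (∑ j, C (lam (Sum.inr j)) * g j) := by
    intro lam
    rw [Fintype.sum_sum_type]
    simp only [hGdef, Sum.elim_inl, Sum.elim_inr, map_sum, map_mul, rename_C]
  have hnonempty : Nonempty (Fin s) := ⟨⟨0, hs⟩⟩
  rw [relSchmidtRankSys, relSchmidtRankSys]
  set A : Set ℕ := {h | ∃ lam : Fin s ⊕ Fin s → ℚ, lam ≠ 0 ∧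
      h = relSchmidtRank k (∑ i, C (lam i) * G i)} with hA
  set B : Set ℕ := {h | ∃ lam : Fin s → ℚ, lam ≠ 0 ∧
      h = relSchmidtRank k (∑ i, C (lam i) * g i)} with hB
  have hAne : A.Nonempty := by
    refine ⟨_, fun _ => 1, ?_, rfl⟩
    intro hcon
    exact one_ne_zero (congrFun hcon (Sum.inl ⟨0, hs⟩))
  have hBne : B.Nonempty := by
    refine ⟨_, fun _ => 1, ?_, rfl⟩
    intro hcon
    exact one_ne_zero (congrFun hcon ⟨0, hs⟩)
  -- Direction A → B : every element of A dominates an element of B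
  have hAB : ∀ a ∈ A, ∃ b ∈ B, b ≤ a := by
    rintro a ⟨lam, hlam, rfl⟩
    set μ : Fin s → ℚ := lam ∘ Sum.inl with hμ
    set ν : Fin s → ℚ := lam ∘ Sum.inr with hν
    set fμ : MvPolynomial (Fin m ⊕ Fin p) ℚ := ∑ j, C (μ j) * g j with hfμ
    set fν : MvPolynomial (Fin m ⊕ Fin p) ℚ := ∑ j, C (ν j) * g j with hfν
    set F : MvPolynomial ((Fin m ⊕ Fin m) ⊕ Fin p) ℚ := ∑ i, C (lam i) * G i with hF
    have hFeq : F = rename L fμ + rename R fν := hsplit lam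
    have hFhom : F.IsHomogeneous k := by
      rw [hFeq]
      exact ((hcombo μ).rename_isHomogeneous.add (hcombo ν).rename_isHomogeneous)
    obtain ⟨l0, hl0⟩ := RSRaux.decompSet_nonempty hk hFhom
    have hsinfF : relSchmidtRank k F ∈ RSRaux.decompSet k F := by
      rw [RSRaux.relSchmidtRank_eq]
      exact Nat.sInf_mem ⟨l0, hl0⟩
    have hμν : μ ≠ 0 ∨ ν ≠ 0 := by
      by_contra hcon
      push_neg at hcon
      apply hlam
      funext i
      rcases i with j | j
      · exact congrFun hcon.1 j
      · exact congrFun hcon.2 j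
    rcases hμν with hμ0 | hν0
    · refine ⟨relSchmidtRank k fμ, ⟨μ, hμ0, rfl⟩, ?_⟩
      have key : fμ = aeval hL F + rename Sum.inr (-(ψ fν)) := by
        rw [hFeq, map_add, hLL, hLR, map_neg]
        ring
      have : relSchmidtRank k F ∈ RSRaux.decompSet k fμ := by
        rw [key]
        exact RSRaux.decompSet_aeval hL hLhom (fun t => rfl) ((hψhom (hcombo ν)).neg) hsinfF
      rw [RSRaux.relSchmidtRank_eq k fμ]
      exact Nat.sInf_le this
    · refine ⟨relSchmidtRank k fν, ⟨ν, hν0, rfl⟩, ?_⟩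
      have key : fν = aeval hR F + rename Sum.inr (-(ψ fμ)) := by
        rw [hFeq, map_add, hRR, hRL, map_neg]
        ring
      have : relSchmidtRank k F ∈ RSRaux.decompSet k fν := by
        rw [key]
        exact RSRaux.decompSet_aeval hR hRhom (fun t => rfl) ((hψhom (hcombo μ)).neg) hsinfF
      rw [RSRaux.relSchmidtRank_eq k fν]
      exact Nat.sInf_le this
  -- Direction B → A : every element of B dominates an element of A
  have hBA : ∀ b ∈ B, ∃ a ∈ A, a ≤ b := by
    rintro b ⟨lam, hlam, rfl⟩
    set f : MvPolynomial (Fin m ⊕ Fin p) ℚ := ∑ j, C (lam j) * g j with hf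
    set lam' : Fin s ⊕ Fin s → ℚ := Sum.elim lam 0 with hlam'
    have hlam'0 : lam' ≠ 0 := by
      obtain ⟨j, hj⟩ := Function.ne_iff.mp hlam
      intro hcon
      exact hj (congrFun hcon (Sum.inl j))
    have hcomboeq : (∑ i, C (lam' i) * G i) = rename L f := by
      rw [hsplit lam']
      simp [hlam', hf]
    refine ⟨relSchmidtRank k (∑ i, C (lam' i) * G i), ⟨lam', hlam'0, rfl⟩, ?_⟩
    rw [hcomboeq]
    obtain ⟨l0, hl0⟩ := RSRaux.decompSet_nonempty hk (hcombo lam)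
    have hsinff : relSchmidtRank k f ∈ RSRaux.decompSet k f := by
      rw [RSRaux.relSchmidtRank_eq]
      exact Nat.sInf_mem ⟨l0, hl0⟩
    have : relSchmidtRank k f ∈ RSRaux.decompSet k (rename L f) :=
      RSRaux.decompSet_rename Sum.inl hsinff
    rw [RSRaux.relSchmidtRank_eq k (rename L f)]
    exact Nat.sInf_le this
  -- conclude
  apply le_antisymm
  · obtain ⟨b0, hb0⟩ := hBne
    have hb0' : sInf B ∈ B := Nat.sInf_mem ⟨b0, hb0⟩
    obtain ⟨a, ha, hab⟩ := hBA _ hb0'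
    exact le_trans (Nat.sInf_le ha) hab
  · obtain ⟨a0, ha0⟩ := hAne
    have ha0' : sInf A ∈ A := Nat.sInf_mem ⟨a0, ha0⟩
    obtain ⟨b, hb, hba⟩ := hAB _ ha0'
    exact le_trans (Nat.sInf_le hb) hba
end

section
/- Let $\mathfrak{f}$ be a system of $r$ linear forms in $n$ variables over $\mathbb{Q}$ with linear rank $\mathcal{B}_1(\mathfrak{f}) \geq C_1 r + C_2$ for positive integers $C_1, C_2$. Then there is a partition of the variables $\mathbf{x} = (\mathbf{y}, \mathbf{z})$ with $|\mathbf{y}| \leq C_1 r$ such that the induced decomposition $\mathfrak{f}(\mathbf{x}) = \mathfrak{f}_1(\mathbf{y}) + \mathfrak{f}_2(\mathbf{z})$ satisfies $\mathcal{B}_1(\mathfrak{f}_1) \geq C_1$ and $\mathcal{B}_1(\mathfrak{f}_2) \geq C_2$. -/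
open Finset

/-- The linear rank `𝓑₁` of a system of linear forms (given by their coefficient vectors). -/
noncomputable def linRank {r : ℕ} {ν : Type*} [Fintype ν] (f : Fin r → ν → ℚ) : ℕ :=
  sInf { c | ∃ lam : Fin r → ℚ, lam ≠ 0 ∧
    c = (Finset.univ.filter fun j : ν => (∑ i, lam i * f i j) ≠ 0).card }

private lemma card_filter_sub {n : ℕ} (I : Finset (Fin n)) (P : Fin n → Prop) [DecidablePred P] :
    (Finset.univ.filter fun j : {x // x ∈ I} => P j.1).card = (I.filter P).card := by
  classical
  apply Finset.card_bij (fun j _ => j.1)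
  · intro a ha
    simp only [mem_filter, mem_univ, true_and] at ha
    exact Finset.mem_filter.2 ⟨a.2, ha⟩
  · intro a _ b _ h
    exact Subtype.ext h
  · intro b hb
    simp only [mem_filter] at hb
    exact ⟨⟨b, hb.1⟩, by simp [hb.2], rfl⟩

private lemma exists_covering {r : ℕ} {ν : Type*} [Fintype ν] (g : Fin r → ν → ℚ)
    (h : ∀ lam : Fin r → ℚ, lam ≠ 0 → ∃ j, (∑ i, lam i * g i j) ≠ 0) :
    ∃ J : Finset ν, J.card ≤ r ∧
      ∀ lam : Fin r → ℚ, lam ≠ 0 → ∃ j ∈ J, (∑ i, lam i * g i j) ≠ 0 := by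
  classical
  set c : ν → (Fin r → ℚ) := fun j i => g i j with hc
  obtain ⟨b, hbsub, hbspan, hbind⟩ := exists_linearIndependent ℚ (Set.range c)
  have hbfin : b.Finite := (Set.finite_range c).subset hbsub
  haveI := hbfin.fintype
  have hcard : hbfin.toFinset.card ≤ r := by
    have h1 := hbind.fintype_card_le_finrank
    rw [Module.finrank_fin_fun] at h1
    simpa [Set.Finite.card_toFinset] using h1
  -- pick preimages
  refine ⟨hbfin.toFinset.attach.image
    (fun v => (show ∃ j, c j = v.1 from hbsub (by simpa using v.2)).choose), ?_, ?_⟩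
  · exact (Finset.card_image_le).trans (by simpa using hcard)
  · intro lam hlam
    by_contra hcon
    push_neg at hcon
    -- the dot-product functional
    let φ : (Fin r → ℚ) →ₗ[ℚ] ℚ := ∑ i, lam i • (LinearMap.proj i)
    have hφ : ∀ v, φ v = ∑ i, lam i * v i := by
      intro v
      simp [φ, LinearMap.sum_apply]
    have hb0 : ∀ v ∈ b, φ v = 0 := by
      intro v hv
      have hv' : v ∈ hbfin.toFinset := hbfin.mem_toFinset.2 hv
      set j := (show ∃ j, c j = v from hbsub (by simpa using hv')).choose with hj
      have hcj : c j = v := (show ∃ j, c j = v from hbsub (by simpa using hv')).choose_spec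
      have hjJ : j ∈ hbfin.toFinset.attach.image
          (fun v => (show ∃ j, c j = v.1 from hbsub (by simpa using v.2)).choose) :=
        Finset.mem_image.2 ⟨⟨v, hv'⟩, Finset.mem_attach _ _, rfl⟩
      have := hcon j hjJ
      rw [← hcj, hφ]
      simpa [c] using this
    have hker : Submodule.span ℚ b ≤ LinearMap.ker φ := by
      rw [Submodule.span_le]
      intro v hv
      exact LinearMap.mem_ker.2 (hb0 v hv)
    obtain ⟨j0, hj0⟩ := h lam hlam
    apply hj0
    have : c j0 ∈ Submodule.span ℚ b := by
      rw [hbspan]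
      exact Submodule.subset_span ⟨j0, rfl⟩
    have := hker this
    rw [LinearMap.mem_ker, hφ] at this
    simpa [c] using this

/-- a system of `r` linear forms of linear rank at least `C₁ r + C₂` admits a
partition of the variables `x = (y, z)` with at most `C₁ r` variables `y` such that the induced
decomposition `f = f₁(y) + f₂(z)` satisfies `𝓑₁(f₁) ≥ C₁` and `𝓑₁(f₂) ≥ C₂`. -/
theorem linRank_split {r n C1 C2 : ℕ} (hC1 : 0 < C1) (hC2 : 0 < C2)
    (f : Fin r → Fin n → ℚ) (hf : C1 * r + C2 ≤ linRank f) :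
    ∃ I : Finset (Fin n), I.card ≤ C1 * r ∧
      C1 ≤ linRank (fun i (j : {x // x ∈ I}) => f i j.1) ∧
      C2 ≤ linRank (fun i (j : {x // x ∈ Iᶜ}) => f i j.1) := by
  classical
  rcases Nat.eq_zero_or_pos r with hr | hr
  · exfalso
    subst hr
    have h0 : linRank f = 0 := by
      unfold linRank
      convert Nat.sInf_empty
      ext c
      simp only [Set.mem_setOf_eq, Set.mem_empty_iff_false, iff_false]
      rintro ⟨lam, hlam, -⟩
      exact hlam (funext fun i => i.elim0)
    omega
  have hsupp : ∀ lam : Fin r → ℚ, lam ≠ 0 →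
      C1 * r + C2 ≤ (Finset.univ.filter fun j => (∑ i, lam i * f i j) ≠ 0).card :=
    fun lam hl => le_trans hf (Nat.sInf_le ⟨lam, hl, rfl⟩)
  -- a nonzero lam exists
  have hlam0 : (Pi.single (⟨0, hr⟩ : Fin r) (1 : ℚ) : Fin r → ℚ) ≠ 0 := by
    intro h
    have := congrFun h ⟨0, hr⟩
    simp at this
  have key : ∀ t, t ≤ C1 → ∃ I : Finset (Fin n), I.card ≤ t * r ∧
      ∀ lam : Fin r → ℚ, lam ≠ 0 →
        t ≤ (I.filter fun j => (∑ i, lam i * f i j) ≠ 0).card := by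
    intro t
    induction t with
    | zero => exact fun _ => ⟨∅, by simp⟩
    | succ t ih =>
      intro ht
      obtain ⟨I, hIcard, hI⟩ := ih (Nat.le_of_succ_le ht)
      have h' : ∀ lam : Fin r → ℚ, lam ≠ 0 →
          ∃ j : {x // x ∈ Iᶜ}, (∑ i, lam i * f i j.1) ≠ 0 := by
        intro lam hl
        by_contra hcon
        push_neg at hcon
        have hsub : (Finset.univ.filter fun j => (∑ i, lam i * f i j) ≠ 0) ⊆ I := by
          intro j hj
          by_contra hjI
          exact (Finset.mem_filter.1 hj).2 (hcon ⟨j, Finset.mem_compl.2 hjI⟩)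
        have h1 := Finset.card_le_card hsub
        have h2 := hsupp lam hl
        have h3 : t * r ≤ C1 * r := Nat.mul_le_mul_right r (Nat.le_of_succ_le ht)
        omega
      obtain ⟨J', hJ'card, hJ'⟩ := exists_covering (fun i (j : {x // x ∈ Iᶜ}) => f i j.1) h'
      refine ⟨I ∪ J'.image Subtype.val, ?_, ?_⟩
      · calc (I ∪ J'.image Subtype.val).card ≤ I.card + (J'.image Subtype.val).card :=
              Finset.card_union_le _ _
          _ ≤ t * r + r := Nat.add_le_add hIcard (Finset.card_image_le.trans hJ'card)
          _ = (t + 1) * r := by ring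
      · intro lam hl
        obtain ⟨j, hjJ, hjne⟩ := hJ' lam hl
        have hjI : j.1 ∉ I := Finset.mem_compl.1 j.2
        have hsubs : insert j.1 (I.filter fun x => (∑ i, lam i * f i x) ≠ 0) ⊆
            (I ∪ J'.image Subtype.val).filter fun x => (∑ i, lam i * f i x) ≠ 0 := by
          intro x hx
          rcases Finset.mem_insert.1 hx with rfl | hx
          · exact Finset.mem_filter.2 ⟨Finset.mem_union_right _
              (Finset.mem_image.2 ⟨j, hjJ, rfl⟩), hjne⟩
          · rcases Finset.mem_filter.1 hx with ⟨hx1, hx2⟩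
            exact Finset.mem_filter.2 ⟨Finset.mem_union_left _ hx1, hx2⟩
        have hcardins : (insert j.1 (I.filter fun x => (∑ i, lam i * f i x) ≠ 0)).card
            = (I.filter fun x => (∑ i, lam i * f i x) ≠ 0).card + 1 :=
          Finset.card_insert_of_notMem (fun hmem => hjI (Finset.mem_filter.1 hmem).1)
        have := Finset.card_le_card hsubs
        have := hI lam hl
        omega
  obtain ⟨I, hIcard, hI⟩ := key C1 le_rfl
  refine ⟨I, hIcard, ?_, ?_⟩
  · unfold linRank
    refine le_csInf ⟨_, ⟨(Pi.single (⟨0, hr⟩ : Fin r) (1 : ℚ) : Fin r → ℚ), hlam0, rfl⟩⟩ ?_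
    rintro cc ⟨lam, hl, rfl⟩
    rw [card_filter_sub I (fun j => (∑ i, lam i * f i j) ≠ 0)]
    exact hI lam hl
  · unfold linRank
    refine le_csInf ⟨_, ⟨(Pi.single (⟨0, hr⟩ : Fin r) (1 : ℚ) : Fin r → ℚ), hlam0, rfl⟩⟩ ?_
    rintro cc ⟨lam, hl, rfl⟩
    rw [card_filter_sub Iᶜ (fun j => (∑ i, lam i * f i j) ≠ 0)]
    have h1 := hsupp lam hl
    have h2 : (I.filter fun j => (∑ i, lam i * f i j) ≠ 0).card ≤ C1 * r :=
      le_trans (Finset.card_le_card (Finset.filter_subset _ _)) hIcard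
    have h3 : (Finset.univ.filter fun j => (∑ i, lam i * f i j) ≠ 0).card
        = (I.filter fun j => (∑ i, lam i * f i j) ≠ 0).card
          + (Iᶜ.filter fun j => (∑ i, lam i * f i j) ≠ 0).card := by
      rw [← Finset.card_union_of_disjoint
        (Finset.disjoint_filter_filter (disjoint_compl_right)),
        ← Finset.filter_union, Finset.union_compl]
    omega
end

section
/- Let $A$ be an $r \times n$ rational matrix whose associated linear system $\mathfrak{f}(\mathbf{x}) = A\mathbf{x}$ has linear rank $\mathcal{B}_1(\mathfrak{f}) \geq C_1 r + C_2$. Then, after permuting columns, $A$ admits a block decomposition $A = [B_1 | B_2 | \cdots | B_{C_1} | A_2]$ where each $B_i$ is an invertible $r \times r$ matrix, and the linear system defined by $[B_1|\cdots|B_{C_1}]$ (in its $C_1 r$ variables) has linear rank at least $C_1$. -/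
open Finset

open Matrix in
lemma exists_invertible_submatrix {r : ℕ} {m : Type*} [Fintype m]
    (M : Matrix (Fin r) m ℚ) (h : LinearIndependent ℚ (fun i => M i)) :
    ∃ e : Fin r → m, Function.Injective e ∧
      IsUnit (Matrix.of fun a c : Fin r => M a (e c)).det := by
  classical
  have hinj : Function.Injective M.vecMulLinear := by
    rw [Matrix.coe_vecMulLinear]; exact Matrix.vecMul_injective_iff.2 h
  have h1 : Module.finrank ℚ (LinearMap.range M.vecMulLinear) = r := by
    rw [LinearMap.finrank_range_of_inj hinj]; simp
  have h2 : Module.finrank ℚ (Submodule.span ℚ (Set.range M)) = r := by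
    change Module.finrank ℚ (Submodule.span ℚ (Set.range M.row)) = r
    rw [← range_vecMulLinear]; exact h1
  have h3 : Matrix.rank Mᵀ = r := by
    rw [Matrix.rank_eq_finrank_span_cols]; exact h2
  have h4 : M.rank = r := by rw [← Matrix.rank_transpose]; exact h3
  have h5 : Submodule.span ℚ (Set.range Mᵀ) = ⊤ := by
    apply Submodule.eq_top_of_finrank_eq
    change Module.finrank ℚ (Submodule.span ℚ (Set.range M.col)) = _
    rw [← Matrix.rank_eq_finrank_span_cols, h4]
    simp
  obtain ⟨b, hb₁, hb₂, hb₃⟩ := exists_linearIndependent ℚ (Set.range Mᵀ)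
  have hfin : b.Finite := (Set.finite_range Mᵀ).subset hb₁
  haveI := hfin.fintype
  let B : Module.Basis b ℚ (Fin r → ℚ) := Module.Basis.mk hb₃ (by rw [Subtype.range_coe, hb₂, h5])
  let eqv : Fin r ≃ b := (Pi.basisFun ℚ (Fin r)).indexEquiv B
  have hchoice : ∀ i : Fin r, ∃ j : m, Mᵀ j = ((eqv i : b) : Fin r → ℚ) :=
    fun i => hb₁ (eqv i).2
  choose e he using hchoice
  refine ⟨e, ?_, ?_⟩
  · intro i i' hii
    apply eqv.injective
    apply Subtype.ext
    rw [← he i, ← he i', hii]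
  · rw [← Matrix.isUnit_iff_isUnit_det, ← Matrix.linearIndependent_cols_iff_isUnit]
    have hcols : (fun c => (Matrix.of fun a c : Fin r => M a (e c))ᵀ c)
        = fun c => ((eqv c : b) : Fin r → ℚ) := by
      funext c
      ext a
      have := congr_fun (he c) a
      simpa using this
    show LinearIndependent ℚ (fun c => (Matrix.of fun a c : Fin r => M a (e c))ᵀ c)
    rw [hcols]
    exact hb₃.comp (fun c => eqv c) eqv.injective

/-- if the linear system given by the rows of an `r × n` rational matrix `A` has
linear rank at least `C₁ r + C₂`, then (after permuting columns) `A` admits a block decomposition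
`A = [B₁ | ⋯ | B_{C₁} | A₂]` with each `B_i` an invertible `r × r` matrix, and the system given
by `[B₁ | ⋯ | B_{C₁}]` has linear rank at least `C₁`.  We express the column permutation by an
injective choice `ι` of the `C₁ · r` columns forming the blocks. -/
theorem matrix_block_decomposition {r n C1 C2 : ℕ} (hC1 : 0 < C1) (hC2 : 0 < C2)
    (A : Matrix (Fin r) (Fin n) ℚ)
    (hA : C1 * r + C2 ≤ linRank (fun i j => A i j)) :
    ∃ ι : Fin C1 × Fin r → Fin n, Function.Injective ι ∧
      (∀ b : Fin C1, IsUnit (Matrix.of fun a c : Fin r => A a (ι (b, c))).det) ∧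
      C1 ≤ linRank (fun a (p : Fin C1 × Fin r) => A a (ι p)) := by
  classical
  rcases Nat.eq_zero_or_pos r with hr | hr
  · exfalso
    subst hr
    have h0 : linRank (fun i j => A i j) = 0 := by
      unfold linRank
      convert Nat.sInf_empty
      ext c
      simp only [Set.mem_setOf_eq, Set.mem_empty_iff_false, iff_false, not_exists]
      intro lam ⟨hlam, _⟩
      exact hlam (funext fun i => i.elim0)
    rw [h0] at hA
    omega
  -- every nontrivial combination has many nonzero coordinates
  have hset : ∀ lam : Fin r → ℚ, lam ≠ 0 →
      C1 * r + C2 ≤ (Finset.univ.filter fun j : Fin n => (∑ i, lam i * A i j) ≠ 0).card :=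
    fun lam hlam => hA.trans (Nat.sInf_le ⟨lam, hlam, rfl⟩)
  -- greedy construction of the blocks
  have key : ∀ k, k ≤ C1 → ∃ ι : Fin k × Fin r → Fin n, Function.Injective ι ∧
      ∀ b : Fin k, IsUnit (Matrix.of fun a c : Fin r => A a (ι (b, c))).det := by
    intro k
    induction k with
    | zero =>
      intro _
      exact ⟨fun p => p.1.elim0, fun p => p.1.elim0, fun b => b.elim0⟩
    | succ k ih =>
      intro hk
      obtain ⟨ι, hinj, hdet⟩ := ih (Nat.le_of_succ_le hk)
      set S : Set (Fin n) := (Set.range ι)ᶜ with hS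
      have hind : LinearIndependent ℚ (fun i => fun j : S => A i (j : Fin n)) := by
        rw [Fintype.linearIndependent_iff]
        intro lam hlam i
        by_contra hi
        have hlam0 : lam ≠ 0 := fun h => hi (by rw [h]; rfl)
        have hsub : (Finset.univ.filter fun j : Fin n => (∑ i, lam i * A i j) ≠ 0) ⊆
            Finset.univ.image ι := by
          intro j hj
          simp only [mem_filter, mem_univ, true_and] at hj
          by_contra hjm
          apply hj
          have hjS : j ∈ S := by
            simp only [hS, Set.mem_compl_iff, Set.mem_range]
            intro ⟨p, hp⟩
            exact hjm (Finset.mem_image.2 ⟨p, Finset.mem_univ _, hp⟩)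
          have := congr_fun hlam ⟨j, hjS⟩
          simpa using this
        have hcard1 := Finset.card_le_card hsub
        have hcard2 : (Finset.univ.image ι).card ≤ k * r := by
          calc (Finset.univ.image ι).card ≤ (Finset.univ : Finset (Fin k × Fin r)).card :=
                Finset.card_image_le
            _ = k * r := by simp
        have h3 := hset lam hlam0
        have hkC : k * r ≤ C1 * r := Nat.mul_le_mul_right r (Nat.le_of_succ_le hk)
        omega
      obtain ⟨e, he_inj, he_det⟩ :=
        exists_invertible_submatrix (Matrix.of fun i (j : S) => A i (j : Fin n)) hind
      refine ⟨fun p => if h : (p.1 : ℕ) < k then ι (⟨p.1, h⟩, p.2) else ((e p.2 : S) : Fin n),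
        ?_, ?_⟩
      · rintro ⟨b1, c1⟩ ⟨b2, c2⟩ hpq
        simp only at hpq
        by_cases h1 : (b1 : ℕ) < k <;> by_cases h2 : (b2 : ℕ) < k
        · rw [dif_pos h1, dif_pos h2] at hpq
          have := hinj hpq
          have hb : b1 = b2 := by
            have := congr_arg (fun q : Fin k × Fin r => (q.1 : ℕ)) this
            exact Fin.ext this
          have hc : c1 = c2 := congr_arg Prod.snd this
          rw [hb, hc]
        · rw [dif_pos h1, dif_neg h2] at hpq
          exfalso
          have : ((e c2 : S) : Fin n) ∈ S := (e c2).2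
          rw [← hpq] at this
          exact this ⟨(⟨b1, h1⟩, c1), rfl⟩
        · rw [dif_neg h1, dif_pos h2] at hpq
          exfalso
          have : ((e c1 : S) : Fin n) ∈ S := (e c1).2
          rw [hpq] at this
          exact this ⟨(⟨b2, h2⟩, c2), rfl⟩
        · rw [dif_neg h1, dif_neg h2] at hpq
          have hb : b1 = b2 := by
            apply Fin.ext
            omega
          have hc : c1 = c2 := he_inj (Subtype.ext hpq)
          rw [hb, hc]
      · intro b
        by_cases h : (b : ℕ) < k
        · have heq : (Matrix.of fun a c : Fin r =>
              A a (if h' : ((b, c).1 : ℕ) < k then ι (⟨(b, c).1, h'⟩, (b, c).2)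
                else ((e (b, c).2 : S) : Fin n)))
              = Matrix.of fun a c : Fin r => A a (ι (⟨b, h⟩, c)) := by
            ext a c
            simp only [Matrix.of_apply, dif_pos h]
          rw [heq]
          exact hdet ⟨b, h⟩
        · have heq : (Matrix.of fun a c : Fin r =>
              A a (if h' : ((b, c).1 : ℕ) < k then ι (⟨(b, c).1, h'⟩, (b, c).2)
                else ((e (b, c).2 : S) : Fin n)))
              = Matrix.of fun a c : Fin r =>
                  (Matrix.of fun i (j : S) => A i (j : Fin n)) a (e c) := by
            ext a c
            simp only [Matrix.of_apply, dif_neg h]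
          rw [heq]
          exact he_det
  obtain ⟨ι, hinj, hdet⟩ := key C1 le_rfl
  refine ⟨ι, hinj, hdet, ?_⟩
  unfold linRank
  refine le_csInf ?_ ?_
  · refine ⟨_, ⟨Pi.single ⟨0, hr⟩ 1, ?_, rfl⟩⟩
    intro h
    have := congr_fun h ⟨0, hr⟩
    simp at this
  · rintro c ⟨lam, hlam, rfl⟩
    have hblock : ∀ b : Fin C1, ∃ cb : Fin r, (∑ i, lam i * A i (ι (b, cb))) ≠ 0 := by
      intro b
      by_contra hcon
      push_neg at hcon
      have hU : IsUnit (Matrix.of fun a c : Fin r => A a (ι (b, c))) :=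
        (Matrix.isUnit_iff_isUnit_det _).2 (hdet b)
      have hVinj := Matrix.vecMul_injective_iff_isUnit.2 hU
      apply hlam
      apply hVinj
      funext c
      simp only [Matrix.vecMul, dotProduct, Matrix.of_apply, Pi.zero_apply, zero_mul,
        Finset.sum_const_zero]
      exact hcon c
    choose cb hcb using hblock
    have hsub : Finset.univ.image (fun b : Fin C1 => ((b, cb b) : Fin C1 × Fin r)) ⊆
        Finset.univ.filter fun p : Fin C1 × Fin r => (∑ i, lam i * A i (ι p)) ≠ 0 := by
      intro p hp
      obtain ⟨b, _, rfl⟩ := Finset.mem_image.1 hp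
      simp only [mem_filter, mem_univ, true_and]
      exact hcb b
    calc C1 = (Finset.univ.image (fun b : Fin C1 => ((b, cb b) : Fin C1 × Fin r))).card := by
          rw [Finset.card_image_of_injective _ (fun b1 b2 h => (Prod.ext_iff.1 h).1)]
          simp
      _ ≤ _ := Finset.card_le_card hsub
end
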